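/- arXiv:1805.03893 — 4 statements merged into one kernel-verified Lean document; each statement's English description precedes it below -/
import Mathlib

section
/- For r ≥ 1, the number of homomorphisms from (ℤ/2ℤ)^r to Sym(n) satisfies h_n((ℤ/2ℤ)^r) ≤ 4^{rn} · n^r · n^{(1 − 2^{−r})n} for all n ≥ 1. -/
/-!
Let `G = (ℤ/2ℤ)^r` act on `{0, …, m}` through `φ`, and let `O` be the orbit of `0` and `H` its
stabilizer. Then `φ` is determined by `O`, by `H`, by a choice of `s_y ∈ G` with `s_y • 0 = y` for
each `y ∈ O`, and by the restriction of `φ` to the complement of `O`: indeed `g • 0 = y` iff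
`s_y⁻¹ g ∈ H`, and `g • (s_y • 0) = (g s_y) • 0`. As `|G / H| = |O| = j + 1 ≤ 2^r`, the subspace `H`
is the kernel of a linear map `G → (ℤ/2ℤ)^j`. Counting the choices gives
`h_{m+1} ≤ ∑_{j < 2^r} C(m, j) 2^{r(2j+1)} h_{m-j}`. For fixed `N ≥ 1`, induction on `m ≤ N` then
gives `h_m ≤ 4^{rm} N^r N^{(1 - 2^{-r})m}`, using `C(m, j) ≤ N^j` and
`j + (1 - 2^{-r})(m - j) ≤ (1 - 2^{-r})(m + 1)` for `j < 2^r`; take `m = N = n`.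
-/

open Equiv Finset Function Module

attribute [local instance] DFunLike.finite

theorem Nat.card_le_sum_of_injective_fibers {X I : Type*} {D : I → Type*} [Finite X]
    [∀ i, Finite (D i)] (f : X → I) (s : Finset I) (hf : ∀ x, f x ∈ s)
    (e : ∀ i, {x // f x = i} → D i) (he : ∀ i, Injective (e i)) :
    Nat.card X ≤ ∑ i ∈ s, Nat.card (D i) := by
  classical
  have := Fintype.ofFinite X
  calc Nat.card X = ∑ i ∈ s, #{x | f x = i} := by
        rw [Nat.card_eq_fintype_card, ← Finset.card_univ]
        exact card_eq_sum_card_fiberwise fun x _ => hf x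
    _ = ∑ i ∈ s, Nat.card {x // f x = i} := by
        simp only [Nat.card_eq_fintype_card, Fintype.card_subtype]
    _ ≤ ∑ i ∈ s, Nat.card (D i) := sum_le_sum fun i _ => Nat.card_le_card_of_injective _ (he i)

theorem Nat.card_monoidHom_perm_congr {G β γ : Type*} [Monoid G] (e : β ≃ γ) :
    Nat.card (G →* Perm β) = Nat.card (G →* Perm γ) :=
  Nat.card_congr (MulEquiv.monoidHomCongrRightEquiv (permCongrHom e))

theorem Submodule.exists_linearMap_ker_eq {K V : Type*} [Field K] [Finite K] [AddCommGroup V]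
    [Module K V] [Module.Finite K V] (H : Submodule K V) {j : ℕ} (hH : Nat.card (V ⧸ H) ≤ j + 1) :
    ∃ w : V →ₗ[K] (Fin j → K), LinearMap.ker w = H := by
  have hrank : finrank K (V ⧸ H) ≤ finrank K (Fin j → K) := by
    rw [finrank_fin_fun, ← Nat.lt_succ_iff]
    calc finrank K (V ⧸ H) < Nat.card K ^ finrank K (V ⧸ H) := Nat.lt_pow_self Finite.one_lt_card
      _ = Nat.card (V ⧸ H) := natCard_eq_pow_finrank.symm
      _ ≤ j + 1 := hH
  obtain ⟨f, hf⟩ := finrank_le_iff_exists_linearMap.1 hrank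
  refine ⟨f ∘ₗ H.mkQ, ?_⟩
  rw [LinearMap.ker_comp, LinearMap.ker_eq_bot.2 hf, ← LinearMap.ker, Submodule.ker_mkQ]

theorem Module.natCard_linearMap_fin_fun {K V : Type*} [Field K] [AddCommGroup V] [Module K V]
    [Module.Finite K V] (j : ℕ) : Nat.card (V →ₗ[K] (Fin j → K)) = Nat.card V ^ j := by
  rw [← Nat.card_congr ((Module.finBasis K V).constr K).toEquiv, Nat.card_fun, Nat.card_fun,
    Nat.card_fin, Nat.card_fin, natCard_eq_pow_finrank (K := K) (V := V), ← pow_mul, ← pow_mul,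
    mul_comm]

namespace MonoidHom

section Group

variable {G α : Type*} [Group G]

def restrictPerm (φ : G →* Perm α) (p : α → Prop) (hp : ∀ g x, p (φ g x) ↔ p x) :
    G →* Perm {x // p x} where
  toFun g := (φ g).subtypePerm (hp g)
  map_one' := by ext; simp
  map_mul' g h := by ext; simp only [Perm.subtypePerm_apply, Perm.mul_apply, map_mul]

theorem eq_of_stabilizer_le_of_sections {φ ψ : G →* Perm α} {a : α}
    (hstab : ∀ g, φ g a = a → ψ g a = a)
    (hsec : ∀ g, ∃ s, φ s a = φ g a ∧ ψ s a = φ g a)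
    (hcompl : ∀ g x, (∀ h, φ h a ≠ x) → φ g x = ψ g x) : φ = ψ := by
  have horbit : ∀ g, φ g a = ψ g a := by
    intro g
    obtain ⟨s, hφs, hψs⟩ := hsec g
    have hψ := hstab (s⁻¹ * g) (by simp [hφs.symm])
    rw [map_mul, Perm.mul_apply, map_inv, Perm.inv_eq_iff_eq] at hψ
    rw [hψ, hψs]
  ext g x
  by_cases hx : ∃ h, φ h a = x
  · obtain ⟨h, rfl⟩ := hx
    rw [← Perm.mul_apply, ← map_mul, horbit, map_mul, Perm.mul_apply, horbit]
  · push Not at hx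
    exact hcompl g x hx

end Group

section Orbit

variable {G α : Type*} [Group G] [Fintype G] [DecidableEq α]

def orbitFinset (φ : G →* Perm α) (a : α) : Finset α :=
  univ.image fun g => φ g a

variable {φ : G →* Perm α} {a x : α}

lemma mem_orbitFinset : x ∈ φ.orbitFinset a ↔ ∃ g, φ g a = x := by
  simp [orbitFinset]

lemma self_mem_orbitFinset : a ∈ φ.orbitFinset a :=
  mem_orbitFinset.2 ⟨1, by simp⟩

lemma apply_mem_orbitFinset_iff (g : G) : φ g x ∈ φ.orbitFinset a ↔ x ∈ φ.orbitFinset a := by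
  simp only [mem_orbitFinset]
  constructor
  · rintro ⟨h, hh⟩
    exact ⟨g⁻¹ * h, by simp [hh]⟩
  · rintro ⟨h, rfl⟩
    exact ⟨g * h, by rw [map_mul, Perm.mul_apply]⟩

lemma card_orbitFinset_le : #(φ.orbitFinset a) ≤ Fintype.card G :=
  card_image_le

lemma index_comap_stabilizer (φ : G →* Perm α) (a : α) :
    ((MulAction.stabilizer (Perm α) a).comap φ).index = #(φ.orbitFinset a) := by
  let := MulAction.compHom α φ
  have hstab : (MulAction.stabilizer (Perm α) a).comap φ = MulAction.stabilizer G a := rfl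
  have horbit : (φ.orbitFinset a : Set α) = MulAction.orbit G a := by
    ext x; simp [mem_orbitFinset, MulAction.mem_orbit_iff]; rfl
  rw [hstab, MulAction.index_stabilizer, ← horbit, Set.ncard_coe_finset]

end Orbit

section ElementaryAbelian

variable (p : ℕ) {V α : Type*} [AddCommGroup V] [Module (ZMod p) V]

def stabilizerSubmodule (φ : Multiplicative V →* Perm α) (a : α) : Submodule (ZMod p) V :=
  AddSubgroup.toZModSubmodule p
    (Subgroup.toAddSubgroup' ((MulAction.stabilizer (Perm α) a).comap φ))

lemma mem_stabilizerSubmodule {φ : Multiplicative V →* Perm α} {a : α} {v : V} :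
    v ∈ φ.stabilizerSubmodule p a ↔ φ (Multiplicative.ofAdd v) a = a :=
  .rfl

variable [Fact p.Prime] [Fintype V] [DecidableEq α] (a : α)

variable (V) in
/-- The data recording a homomorphism whose orbit through `a` is `insert a T`: a linear map whose
kernel is the stabilizer of `a`, a group element carrying `a` to each point of the orbit, and the
restriction of the action to the complement of the orbit. -/
abbrev OrbitData (T : Finset α) : Type _ :=
  (V →ₗ[ZMod p] (Fin #T → ZMod p)) × ({x // x ∈ insert a T} → Multiplicative V) ×
    (Multiplicative V →* Perm {x // x ∉ insert a T})

variable {a}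

lemma exists_linearMap_ker_eq_stabilizerSubmodule {φ : Multiplicative V →* Perm α} {T : Finset α}
    (hT : φ.orbitFinset a = insert a T) :
    ∃ w : V →ₗ[ZMod p] (Fin #T → ZMod p), LinearMap.ker w = φ.stabilizerSubmodule p a := by
  refine (φ.stabilizerSubmodule p a).exists_linearMap_ker_eq ?_
  calc Nat.card (V ⧸ φ.stabilizerSubmodule p a)
      = ((MulAction.stabilizer (Perm α) a).comap φ).index := rfl
    _ = #(insert a T) := by rw [index_comap_stabilizer, hT]
    _ ≤ #T + 1 := card_insert_le a T

noncomputable def orbitData (φ : Multiplicative V →* Perm α) {T : Finset α}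
    (hT : φ.orbitFinset a = insert a T) : OrbitData p V a T :=
  (Classical.choose (exists_linearMap_ker_eq_stabilizerSubmodule p hT),
    fun x => Classical.choose (mem_orbitFinset.1 (by rw [hT]; exact x.2)),
    φ.restrictPerm (· ∉ insert a T) fun g x => by rw [← hT, apply_mem_orbitFinset_iff])

section orbitData

variable {φ : Multiplicative V →* Perm α} {T : Finset α} (hT : φ.orbitFinset a = insert a T)

lemma ker_orbitData_fst : LinearMap.ker (orbitData p φ hT).1 = φ.stabilizerSubmodule p a :=
  Classical.choose_spec (exists_linearMap_ker_eq_stabilizerSubmodule p hT)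

lemma orbitData_snd_apply (x : {x // x ∈ insert a T}) : φ ((orbitData p φ hT).2.1 x) a = x :=
  Classical.choose_spec (mem_orbitFinset.1 (by rw [hT]; exact x.2))

lemma orbitData_thd_apply (g : Multiplicative V) (x : {x // x ∉ insert a T}) :
    ((orbitData p φ hT).2.2 g x : α) = φ g x :=
  rfl

end orbitData

lemma orbitData_injective {φ ψ : Multiplicative V →* Perm α} {T : Finset α}
    (hφ : φ.orbitFinset a = insert a T) (hψ : ψ.orbitFinset a = insert a T)
    (h : orbitData p φ hφ = orbitData p ψ hψ) : φ = ψ := by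
  refine eq_of_stabilizer_le_of_sections (a := a) (fun g hg => ?_) (fun g => ?_) fun g x hx => ?_
  · have hstab : φ.stabilizerSubmodule p a = ψ.stabilizerSubmodule p a := by
      rw [← ker_orbitData_fst p hφ, ← ker_orbitData_fst p hψ, h]
    have hg' : Multiplicative.toAdd g ∈ φ.stabilizerSubmodule p a :=
      (mem_stabilizerSubmodule p).2 hg
    exact (mem_stabilizerSubmodule p).1 (hstab ▸ hg')
  · have hy : φ g a ∈ insert a T := hφ ▸ mem_orbitFinset.2 ⟨g, rfl⟩
    refine ⟨(orbitData p φ hφ).2.1 ⟨_, hy⟩, orbitData_snd_apply p hφ _, ?_⟩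
    rw [h]
    exact orbitData_snd_apply p hψ _
  · have hx' : x ∉ insert a T := by
      rw [← hφ, mem_orbitFinset]
      exact fun ⟨h, hh⟩ => hx h hh
    rw [← orbitData_thd_apply p hφ g ⟨x, hx'⟩, h, orbitData_thd_apply]

variable [Fintype α]

theorem card_le_sum_card_orbitData :
    Nat.card (Multiplicative V →* Perm α) ≤
      ∑ T ∈ (univ.erase a).powerset with #T < Nat.card V, Nat.card (OrbitData p V a T) :=
  Nat.card_le_sum_of_injective_fibers (fun φ => (φ.orbitFinset a).erase a) _
    (fun φ => mem_filter.2 ⟨mem_powerset.2 (erase_subset_erase _ (subset_univ _)),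
      (card_erase_lt_of_mem self_mem_orbitFinset).trans_le
        (card_orbitFinset_le.trans_eq Fintype.card_eq_nat_card)⟩)
    (fun T ⟨φ, hφ⟩ => orbitData p φ (by rw [← hφ, insert_erase self_mem_orbitFinset]))
    fun T ⟨_, _⟩ ⟨_, _⟩ h => Subtype.ext (orbitData_injective p _ _ h)

lemma card_orbitData {T : Finset α} (haT : a ∉ T) :
    Nat.card (OrbitData p V a T) = Nat.card V ^ (2 * #T + 1) *
      Nat.card (Multiplicative V →* Perm (Fin (Fintype.card α - (#T + 1)))) := by
  have hcompl : Nat.card {x // x ∉ insert a T} = Fintype.card α - (#T + 1) := by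
    rw [Nat.card_eq_fintype_card, Fintype.card_subtype_compl, Fintype.card_coe,
      card_insert_of_notMem haT]
  rw [Nat.card_prod, Nat.card_prod, ← mul_assoc, Module.natCard_linearMap_fin_fun, Nat.card_fun,
    Nat.card_eq_finsetCard, card_insert_of_notMem haT,
    Nat.card_monoidHom_perm_congr (Finite.equivFinOfCardEq hcompl)]
  change Nat.card V ^ #T * Nat.card V ^ (#T + 1) * _ = _
  rw [← pow_add, two_mul, add_assoc]

end ElementaryAbelian

end MonoidHom

theorem card_monoidHom_perm_fin_succ_le (p : ℕ) [Fact p.Prime] {V : Type*} [AddCommGroup V]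
    [Module (ZMod p) V] [Fintype V] (m : ℕ) :
    Nat.card (Multiplicative V →* Perm (Fin (m + 1))) ≤
      ∑ j ∈ range (m + 1) with j < Nat.card V,
        m.choose j *
          (Nat.card V ^ (2 * j + 1) * Nat.card (Multiplicative V →* Perm (Fin (m - j)))) := by
  set F : ℕ → ℕ := fun j => if j < Nat.card V then
    Nat.card V ^ (2 * j + 1) * Nat.card (Multiplicative V →* Perm (Fin (m - j))) else 0
  have hcard : #((univ : Finset (Fin (m + 1))).erase 0) = m := by simp
  calc _ ≤ _ := MonoidHom.card_le_sum_card_orbitData p (a := (0 : Fin (m + 1)))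
    _ = ∑ T ∈ ((univ : Finset (Fin (m + 1))).erase 0).powerset, F #T := by
        rw [sum_filter]
        refine sum_congr rfl fun T hT => ?_
        rw [MonoidHom.card_orbitData p (fun h => by simpa using mem_powerset.1 hT h),
          Fintype.card_fin, Nat.add_sub_add_right]
    _ = _ := by
        rw [sum_powerset_apply_card, hcard, sum_filter]
        simp [F, smul_eq_mul, mul_ite]

noncomputable def homCountBound (r N m : ℕ) : ℝ :=
  4 ^ (r * m) * (N : ℝ) ^ r * (N : ℝ) ^ ((1 - ((1 : ℝ) / 2) ^ r) * m)

theorem choose_mul_rpow_le {N j k : ℕ} {ε : ℝ} (hjk : j + k + 1 ≤ N) (hε : ε * (j + 1) ≤ 1) :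
    ((j + k).choose j : ℝ) * (N : ℝ) ^ ((1 - ε) * k) ≤ (N : ℝ) ^ ((1 - ε) * (j + k + 1)) := by
  have hN : (1 : ℝ) ≤ N := by exact_mod_cast (by omega : 1 ≤ N)
  have hchoose : ((j + k).choose j : ℝ) ≤ (N : ℝ) ^ (j : ℝ) := by
    rw [Real.rpow_natCast]
    exact_mod_cast (Nat.choose_le_pow _ _).trans (Nat.pow_le_pow_left (by omega) _)
  calc _ ≤ (N : ℝ) ^ (j : ℝ) * (N : ℝ) ^ ((1 - ε) * k) := by gcongr
    _ = (N : ℝ) ^ (j + (1 - ε) * k) := (Real.rpow_add (by positivity) _ _).symm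
    _ ≤ _ := Real.rpow_le_rpow_of_exponent_le hN (by linarith)

theorem choose_mul_homCountBound_le {r N j k : ℕ} (hjr : j < 2 ^ r) (hjk : j + k + 1 ≤ N) :
    ((j + k).choose j : ℝ) * ((2 ^ r) ^ (2 * j + 1) * homCountBound r N k) ≤
      homCountBound r N (j + k + 1) / 2 ^ r := by
  have hε : ((1 : ℝ) / 2) ^ r * (j + 1) ≤ 1 := by
    calc ((1 : ℝ) / 2) ^ r * (j + 1) ≤ ((1 : ℝ) / 2) ^ r * 2 ^ r := by
          gcongr; exact_mod_cast hjr
      _ = 1 := by rw [← mul_pow]; norm_num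
  have h4 : ∀ n, (4 : ℝ) ^ n = 2 ^ (2 * n) := fun n => by rw [pow_mul]; norm_num
  rw [le_div_iff₀ (by positivity), homCountBound, homCountBound]
  calc _ = 4 ^ (r * (j + k + 1)) * (N : ℝ) ^ r *
        (((j + k).choose j : ℝ) * (N : ℝ) ^ ((1 - ((1 : ℝ) / 2) ^ r) * k)) := by
        simp only [h4]; ring
    _ ≤ _ := by
        gcongr
        push_cast
        exact choose_mul_rpow_le hjk hε

theorem card_monoidHom_perm_le_homCountBound (r N : ℕ) (hN : 1 ≤ N) (m : ℕ) (hmN : m ≤ N) :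
    (Nat.card (Multiplicative (Fin r → ZMod 2) →* Perm (Fin m)) : ℝ) ≤ homCountBound r N m := by
  induction m using Nat.strong_induction_on with
  | _ m ih =>
  rcases m with _ | m
  · have : Unique (Multiplicative (Fin r → ZMod 2) →* Perm (Fin 0)) :=
      { default := 1, uniq := fun _ => MonoidHom.ext fun _ => Subsingleton.elim _ _ }
    simpa [Nat.card_unique, homCountBound] using one_le_pow₀ (by exact_mod_cast hN : (1 : ℝ) ≤ N)
  have hterm : ∀ j ∈ {j ∈ range (m + 1) | j < 2 ^ r}, (m.choose j : ℝ) * ((2 ^ r) ^ (2 * j + 1) *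
      Nat.card (Multiplicative (Fin r → ZMod 2) →* Perm (Fin (m - j)))) ≤
        homCountBound r N (m + 1) / 2 ^ r := by
    intro j hj
    obtain ⟨hjm, hjr⟩ := mem_filter.1 hj
    obtain ⟨k, rfl⟩ := Nat.exists_eq_add_of_le (Nat.lt_succ_iff.1 (mem_range.1 hjm))
    rw [Nat.add_sub_cancel_left]
    calc _ ≤ ((j + k).choose j : ℝ) * ((2 ^ r) ^ (2 * j + 1) * homCountBound r N k) := by
          gcongr; exact ih k (by omega) (by omega)
      _ ≤ _ := choose_mul_homCountBound_le hjr hmN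
  have hcount : #{j ∈ range (m + 1) | j < 2 ^ r} ≤ 2 ^ r :=
    (card_le_card fun j hj => mem_range.2 (mem_filter.1 hj).2).trans_eq (card_range _)
  calc _ ≤ ∑ j ∈ range (m + 1) with j < 2 ^ r, (m.choose j : ℝ) * ((2 ^ r) ^ (2 * j + 1) *
        Nat.card (Multiplicative (Fin r → ZMod 2) →* Perm (Fin (m - j)))) := by
        have := card_monoidHom_perm_fin_succ_le 2 (V := Fin r → ZMod 2) m
        simp only [Nat.card_fun, Nat.card_zmod, Nat.card_fin] at this
        exact_mod_cast this
    _ ≤ ∑ j ∈ range (m + 1) with j < 2 ^ r, homCountBound r N (m + 1) / 2 ^ r := sum_le_sum hterm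
    _ ≤ 2 ^ r * (homCountBound r N (m + 1) / 2 ^ r) := by
        have : 0 ≤ homCountBound r N (m + 1) := by unfold homCountBound; positivity
        rw [sum_const, nsmul_eq_mul]
        gcongr
        exact_mod_cast hcount
    _ = _ := mul_div_cancel₀ _ (by positivity)

theorem card_hom_elementary_abelian_two_perm_le_general (r n : ℕ) (hn : 1 ≤ n) :
    (Nat.card (Multiplicative (Fin r → ZMod 2) →* Equiv.Perm (Fin n)) : ℝ) ≤
      4 ^ (r * n) * (n : ℝ) ^ r *
        (n : ℝ) ^ ((1 - ((1 : ℝ) / 2) ^ r) * n) :=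
  card_monoidHom_perm_le_homCountBound r n hn n le_rfl

/-- For `r ≥ 1`, the number of homomorphisms from `(ℤ/2ℤ)^r` to `Sym(n)` is at most
`4^{rn} · n^r · n^{(1 - 2^{-r})n}` for all `n ≥ 1`. -/
theorem card_hom_elementary_abelian_two_perm_le (r n : ℕ) (hr : 1 ≤ r) (hn : 1 ≤ n) :
    (Nat.card (Multiplicative (Fin r → ZMod 2) →* Equiv.Perm (Fin n)) : ℝ) ≤
      4 ^ (r * n) * (n : ℝ) ^ r *
        (n : ℝ) ^ ((1 - ((1 : ℝ) / 2) ^ r) * n) :=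
  card_hom_elementary_abelian_two_perm_le_general r n hn
end

section
/- For r ≥ 1 and n ≥ 2^r, there is an embedding φ of Γ = (ℤ/2ℤ)^r into Sym(n) (via ⌊n/2^r⌋ diagonal copies of the regular representation) whose centralizer in Sym(n) has order at most ⌊n/2^r⌋! · 2^{rn/2^r} · (2^r)!. -/
/-!
Let `Γ` act on `k = ⌊n / |Γ|⌋` copies of itself by left multiplication and trivially on the
remaining `m = n - k|Γ|` points. A permutation commuting with this action must preserve the set of
`Γ`-fixed points, which for `Γ ≠ 1` are exactly the `m` extra points, so it splits as a permutation
of those times an equivariant permutation of `Fin k × Γ`. The latter is determined by where it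
sends the `k` points `(i, 1)`, and these images lie in pairwise distinct copies: that leaves at most
`k! · |Γ|^k` choices. With `|Γ| = 2^r` and `m < 2^r` this gives the bound.
-/

open Equiv Function Subgroup

section Centralizer

variable {G H K : Type*} [Group G] [Group H] [Group K]

theorem MonoidHom.mem_centralizer_range_iff {f : G →* H} {x : H} :
    x ∈ centralizer (f.range : Set H) ↔ ∀ g, f g * x = x * f g := by
  simp [mem_centralizer_iff]

theorem Subgroup.map_centralizer_mulEquiv (e : H ≃* K) (s : Set H) :
    (centralizer s).map e.toMonoidHom = centralizer (e '' s) := by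
  refine le_antisymm (map_centralizer_le_centralizer_image s _) fun x hx => ?_
  refine ⟨e.symm x, fun h hh => e.injective ?_, by simp⟩
  simpa using hx (e h) ⟨h, hh, rfl⟩

theorem Subgroup.card_centralizer_image_mulEquiv (e : H ≃* K) (s : Set H) :
    Nat.card (centralizer (e '' s)) = Nat.card (centralizer s) := by
  rw [← map_centralizer_mulEquiv, card_map_of_injective e.injective]

end Centralizer

section DiagonalRegular

variable (G ι β : Type*) [Group G]

def diagonalRegular : G →* Perm (ι × G) where
  toFun g := prodCongr (Equiv.refl ι) (Equiv.mulLeft g)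
  map_one' := by ext <;> simp
  map_mul' a b := by ext <;> simp [mul_assoc]

def diagonalRegularSum : G →* Perm ((ι × G) ⊕ β) :=
  (Perm.sumCongrHom (ι × G) β).comp ((diagonalRegular G ι).prod 1)

variable {G ι β}

@[simp]
theorem diagonalRegular_apply (g : G) (p : ι × G) : diagonalRegular G ι g p = (p.1, g * p.2) :=
  rfl

theorem diagonalRegularSum_apply (g : G) :
    diagonalRegularSum G ι β g = sumCongr (diagonalRegular G ι g) 1 :=
  rfl

theorem diagonalRegularSum_injective [Nonempty ι] :
    Injective (diagonalRegularSum G ι β) := by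
  intro a b h
  obtain ⟨i⟩ := ‹Nonempty ι›
  simpa [diagonalRegularSum_apply] using congr($h (Sum.inl (i, 1)))

theorem apply_eq_of_mem_centralizer_diagonalRegular {σ : Perm (ι × G)}
    (hσ : σ ∈ centralizer ((diagonalRegular G ι).range : Set (Perm (ι × G)))) (i : ι) (x : G) :
    σ (i, x) = ((σ (i, 1)).1, x * (σ (i, 1)).2) := by
  simpa using (congr($((diagonalRegular G ι).mem_centralizer_range_iff.mp hσ x) (i, 1))).symm

theorem card_centralizer_diagonalRegular_le [Finite ι] [Finite G] :
    Nat.card (centralizer ((diagonalRegular G ι).range : Set (Perm (ι × G)))) ≤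
      (Nat.card ι).factorial * Nat.card G ^ Nat.card ι := by
  set C := centralizer ((diagonalRegular G ι).range : Set (Perm (ι × G)))
  have apply_eq (σ : C) := apply_eq_of_mem_centralizer_diagonalRegular σ.2
  have copy_injective (σ : C) : Injective fun i => (σ.1 (i, 1)).1 := by
    intro i j (hij : (σ.1 (i, 1)).1 = (σ.1 (j, 1)).1)
    have : σ.1 (i, (σ.1 (j, 1)).2 * (σ.1 (i, 1)).2⁻¹) = σ.1 (j, 1) := by
      rw [apply_eq σ i, inv_mul_cancel_right, hij]
    exact congr_arg Prod.fst (σ.1.injective this)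
  let F (σ : C) : Perm ι × (ι → G) :=
    (ofBijective _ (Finite.injective_iff_bijective.mp (copy_injective σ)),
      fun i => (σ.1 (i, 1)).2)
  have hF : Injective F := by
    intro σ τ h
    have hbase (i : ι) : σ.1 (i, 1) = τ.1 (i, 1) :=
      Prod.ext congr(($h).1 i) congr(($h).2 i)
    ext ⟨i, x⟩ : 2
    rw [apply_eq σ i x, apply_eq τ i x, hbase]
  calc Nat.card C ≤ Nat.card (Perm ι × (ι → G)) := Nat.card_le_card_of_injective F hF
    _ = (Nat.card ι).factorial * Nat.card G ^ Nat.card ι := by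
      rw [Nat.card_prod, Nat.card_perm, Nat.card_fun]

theorem mem_range_inr_of_forall_diagonalRegularSum_apply_eq [Nontrivial G] {x : (ι × G) ⊕ β}
    (hx : ∀ g, diagonalRegularSum G ι β g x = x) : x ∈ Set.range Sum.inr := by
  obtain ⟨g, hg⟩ := exists_ne (1 : G)
  rcases x with ⟨i, y⟩ | b
  · simpa [diagonalRegularSum_apply, hg] using hx g
  · exact ⟨b, rfl⟩

theorem centralizer_diagonalRegularSum_le [Nontrivial G] [Finite ι] [Finite G] [Finite β] :
    centralizer ((diagonalRegularSum G ι β).range : Set (Perm ((ι × G) ⊕ β))) ≤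
      ((centralizer ((diagonalRegular G ι).range : Set (Perm (ι × G)))).prod ⊤).map
        (Perm.sumCongrHom (ι × G) β) := by
  intro σ hσ
  rw [MonoidHom.mem_centralizer_range_iff] at hσ
  have maps_inr : Set.MapsTo σ (Set.range Sum.inr) (Set.range Sum.inr) := by
    rintro _ ⟨b, rfl⟩
    refine mem_range_inr_of_forall_diagonalRegularSum_apply_eq fun g => ?_
    rw [← Perm.mul_apply, hσ g, Perm.mul_apply]
    rfl
  obtain ⟨⟨σ₁, σ₂⟩, rfl⟩ := Perm.mem_sumCongrHom_range_of_perm_mapsTo_inl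
    ((Perm.perm_mapsTo_inl_iff_mapsTo_inr σ).mpr maps_inr)
  refine ⟨(σ₁, σ₂), ⟨?_, mem_top σ₂⟩, rfl⟩
  refine (diagonalRegular G ι).mem_centralizer_range_iff.mpr fun g => ?_
  have h : Perm.sumCongrHom (ι × G) β ((diagonalRegular G ι g, 1) * (σ₁, σ₂)) =
      Perm.sumCongrHom (ι × G) β ((σ₁, σ₂) * (diagonalRegular G ι g, 1)) := by
    rw [map_mul, map_mul]; exact hσ g
  exact congr_arg Prod.fst (Perm.sumCongrHom_injective h)

theorem card_centralizer_diagonalRegularSum_le [Nontrivial G] [Finite ι] [Finite G] [Finite β] :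
    Nat.card (centralizer ((diagonalRegularSum G ι β).range : Set (Perm ((ι × G) ⊕ β)))) ≤
      (Nat.card ι).factorial * Nat.card G ^ Nat.card ι * (Nat.card β).factorial := by
  set C := centralizer ((diagonalRegular G ι).range : Set (Perm (ι × G)))
  calc _ ≤ Nat.card ((C.prod ⊤).map (Perm.sumCongrHom (ι × G) β)) :=
        card_le_of_le centralizer_diagonalRegularSum_le
    _ = Nat.card C * (Nat.card β).factorial := by
      rw [card_map_of_injective Perm.sumCongrHom_injective, Nat.card_congr (prodEquiv C ⊤).toEquiv,
        Nat.card_prod, card_top, Nat.card_perm]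
    _ ≤ _ := by gcongr; exact card_centralizer_diagonalRegular_le

end DiagonalRegular

theorem Real.pow_natDiv_le_rpow_div {b : ℝ} (hb : 1 ≤ b) (n q : ℕ) :
    b ^ (n / q) ≤ b ^ ((n : ℝ) / q) := by
  rw [← Real.rpow_natCast]
  exact Real.rpow_le_rpow_of_exponent_le hb Nat.cast_div_le

/-- For `r ≥ 1` and `n ≥ 2^r`, there is an embedding `φ` of `(ℤ/2ℤ)^r` into `Sym(n)`
whose centralizer in `Sym(n)` has order at most `⌊n/2^r⌋! · 2^{r·n/2^r} · (2^r)!`. -/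
theorem exists_embedding_elementary_abelian_two_with_small_centralizer
    (r n : ℕ) (hr : 1 ≤ r) (hn : 2 ^ r ≤ n) :
    ∃ φ : Multiplicative (Fin r → ZMod 2) →* Equiv.Perm (Fin n),
      Function.Injective φ ∧
      (Nat.card (Subgroup.centralizer ((φ.range : Subgroup (Equiv.Perm (Fin n))) :
          Set (Equiv.Perm (Fin n)))) : ℝ) ≤
        (Nat.factorial (n / 2 ^ r)) * 2 ^ ((r : ℝ) * n / 2 ^ r) *
          Nat.factorial (2 ^ r) := by
  let G := Multiplicative (Fin r → ZMod 2)
  let k := n / 2 ^ r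
  let m := n % 2 ^ r
  have : Nonempty (Fin r) := ⟨⟨0, hr⟩⟩
  have : Nonempty (Fin k) := ⟨⟨0, Nat.div_pos hn (by positivity)⟩⟩
  have card_G : Nat.card G = 2 ^ r := by simp [G]
  let e : (Fin k × G) ⊕ Fin m ≃ Fin n := Finite.equivFinOfCardEq <| by
    rw [Nat.card_sum, Nat.card_prod, card_G, Nat.card_fin, Nat.card_fin, mul_comm, Nat.div_add_mod]
  refine ⟨e.permCongrHom.toMonoidHom.comp (diagonalRegularSum G (Fin k) (Fin m)),
    e.permCongrHom.injective.comp diagonalRegularSum_injective, ?_⟩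
  have card_le := card_centralizer_diagonalRegularSum_le (G := G) (ι := Fin k) (β := Fin m)
  rw [card_G, Nat.card_fin, Nat.card_fin, ← pow_mul] at card_le
  rw [MonoidHom.range_comp, coe_map, MulEquiv.coe_toMonoidHom, card_centralizer_image_mulEquiv]
  calc _ ≤ ((k.factorial * 2 ^ (r * k) * m.factorial : ℕ) : ℝ) := by exact_mod_cast card_le
    _ ≤ _ := by
      push_cast
      gcongr
      · calc (2 : ℝ) ^ (r * k) = (2 ^ r) ^ (n / 2 ^ r) := pow_mul _ _ _
          _ ≤ (2 ^ r) ^ ((n : ℝ) / (2 ^ r : ℕ)) :=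
            Real.pow_natDiv_le_rpow_div (one_le_pow₀ one_le_two) _ _
          _ = 2 ^ ((r : ℝ) * n / 2 ^ r) := by
            rw [mul_div_assoc, Real.rpow_natCast_mul zero_le_two]; push_cast; rfl
      · exact (Nat.mod_lt n (by positivity)).le
end

section
/- A right-angled Coxeter group C(𝒢) with 𝒢 finite and not complete is virtually abelian if and only if there do not exist three pairwise non-adjacent vertices in 𝒢 and there does not exist an edge {v,w} and a third vertex u adjacent to neither v nor w. Equivalently, if 𝒢 is not complete and every vertex distinct from two fixed non-adjacent vertices v₁,v₂ is adjacent to both, then C(𝒢) ≅ D_∞ × C(𝒢 ∖ {v₁,v₂}). -/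
/-!
If a vertex `u` has two distinct non-neighbours `v` and `w`, sending `u`, `v`, `w` to three
involutions of `GL₃(ℚ)`, the last two commuting, and every other vertex to `1` gives a
representation in which no nonzero powers of `(uv)²` and `(uw)²` commute, whereas in a
virtually abelian group the `n`-th powers of any two elements commute for some fixed `n ≠ 0`.
Otherwise every vertex has at most one non-neighbour: the products `ab` over the non-edges
`{a, b}` then pairwise commute and generate a normal subgroup whose quotient is generated by
finitely many commuting involutions, hence finite. The splitting
`C(𝒢) ≅ D_∞ × C(𝒢 ∖ {v₁, v₂})` is the Coxeter group of a join being the product of the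
Coxeter groups of its two sides.
-/

/-- The right-angled Coxeter group of a simple graph `G`: generators are the vertices,
which are involutions, with commutation relations between adjacent vertices. -/
abbrev RACG {V : Type*} (G : SimpleGraph V) : Type _ :=
  PresentedGroup {r : FreeGroup V |
    (∃ v : V, r = FreeGroup.of v * FreeGroup.of v) ∨
    (∃ v w : V, G.Adj v w ∧
      r = FreeGroup.of v * FreeGroup.of w * (FreeGroup.of v)⁻¹ * (FreeGroup.of w)⁻¹)}

open Subgroup

def IsVirtuallyAbelian (Γ : Type*) [Group Γ] : Prop :=
  ∃ H : Subgroup Γ, H.index ≠ 0 ∧ ∀ a ∈ H, ∀ b ∈ H, a * b = b * a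

theorem IsVirtuallyAbelian.exists_commute_pow {Γ : Type*} [Group Γ] (h : IsVirtuallyAbelian Γ) :
    ∃ n ≠ 0, ∀ x y : Γ, Commute (x ^ n) (y ^ n) := by
  obtain ⟨H, hH, hcomm⟩ := h
  have : H.FiniteIndex := ⟨hH⟩
  have : H.normalCore.FiniteIndex := H.finiteIndex_normalCore
  exact ⟨H.normalCore.index, FiniteIndex.index_ne_zero, fun x y =>
    hcomm _ (H.normalCore_le (H.normalCore.pow_index_mem x))
      _ (H.normalCore_le (H.normalCore.pow_index_mem y))⟩

theorem finite_of_closure_eq_top_of_commute {Γ : Type*} [Group Γ] {X : Set Γ} (hX : X.Finite)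
    (hgen : closure X = ⊤) (hcomm : ∀ x ∈ X, ∀ y ∈ X, x * y = y * x)
    (htors : ∀ x ∈ X, IsOfFinOrder x) : Finite Γ := by
  have := isMulCommutative_closure hcomm
  rw [hgen] at this
  let _ : CommGroup Γ := { mul_comm := fun a b => setLike_mul_comm (mem_top a) (mem_top b) }
  have : Group.FG Γ := ⟨⟨hX.toFinset, by simpa using hgen⟩⟩
  refine CommGroup.finite_of_fg_isMulTorsion Γ fun g => ?_
  have : closure X ≤ CommGroup.torsion Γ := (closure_le _).mpr htors
  exact this (hgen ▸ mem_top g)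

theorem Set.eq_or_eq_of_mem_compl_setOf_ne_and_ne {V : Type*} {v₁ v₂ u : V}
    (hu : u ∈ {u | u ≠ v₁ ∧ u ≠ v₂}ᶜ) : u = v₁ ∨ u = v₂ := by
  by_contra h
  push Not at h
  exact hu h

namespace SimpleGraph

variable {V : Type*} {G : SimpleGraph V}

theorem adj_of_compl_adj_of_ne (hG : ∀ v, (Gᶜ.neighborSet v).Subsingleton) {a b t : V}
    (hab : Gᶜ.Adj a b) (hta : t ≠ a) (htb : t ≠ b) : G.Adj t a := by
  by_contra h
  exact htb (hG a hab ((G.compl_adj a t).mpr ⟨hta.symm, fun h' => h h'.symm⟩)).symm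

open scoped Classical in
noncomputable def induceComplNeIsoBot {v₁ v₂ : V} (h12 : v₁ ≠ v₂) (hn : ¬G.Adj v₁ v₂) :
    G.induce {u | u ≠ v₁ ∧ u ≠ v₂}ᶜ ≃g (⊥ : SimpleGraph (Fin 2)) where
  toFun u := if u.1 = v₁ then 0 else 1
  invFun i := ⟨![v₁, v₂] i, by fin_cases i <;> simp⟩
  left_inv u := by
    rcases Set.eq_or_eq_of_mem_compl_setOf_ne_and_ne u.2 with hu | hu <;>
      exact Subtype.ext (by simp [hu, h12.symm])
  right_inv i := by fin_cases i <;> simp [h12.symm]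
  map_rel_iff' {a b} := by
    simp only [bot_adj, false_iff, comap_adj, Function.Embedding.subtype_apply]
    rcases Set.eq_or_eq_of_mem_compl_setOf_ne_and_ne a.2 with ha | ha <;>
      rcases Set.eq_or_eq_of_mem_compl_setOf_ne_and_ne b.2 with hb | hb <;>
      simp [ha, hb, hn, G.adj_comm v₂]

end SimpleGraph

namespace ReflectionRep

def A : Matrix (Fin 3) (Fin 3) ℚ := !![1, 0, 0; 1, 1, 1; -2, 0, -1]
def B : Matrix (Fin 3) (Fin 3) ℚ := !![1, 0, 0; 0, -1, 0; 0, 0, -1]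
def C : Matrix (Fin 3) (Fin 3) ℚ := !![-1, 0, 0; 0, 1, 0; 0, 0, -1]

theorem A_mul_self : A * A = 1 := by
  rw [Matrix.one_fin_three]; norm_num [A, Matrix.mul_fin_three]

theorem B_mul_self : B * B = 1 := by
  rw [Matrix.one_fin_three]; norm_num [B, Matrix.mul_fin_three]

theorem C_mul_self : C * C = 1 := by
  rw [Matrix.one_fin_three]; norm_num [C, Matrix.mul_fin_three]

theorem commute_B_C : Commute B C := by
  norm_num [Commute, SemiconjBy, B, C, Matrix.mul_fin_three]

theorem AB_sq_pow (n : ℕ) :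
    ((A * B) ^ 2) ^ n = !![1, 0, 0; 2 * (n : ℚ), 1, 0; -4 * n, 0, 1] := by
  induction n with
  | zero => simp [Matrix.one_fin_three]
  | succ n ih =>
    rw [pow_succ, ih]
    norm_num [A, B, Matrix.mul_fin_three, pow_two]
    constructor <;> ring

theorem AC_sq_pow (n : ℕ) :
    ((A * C) ^ 2) ^ n = !![1, 0, 0; -2 * (n : ℚ), 1, -2 * n; 0, 0, 1] := by
  induction n with
  | zero => simp [Matrix.one_fin_three]
  | succ n ih =>
    rw [pow_succ, ih]
    norm_num [A, C, Matrix.mul_fin_three, pow_two]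
    constructor <;> ring

-- The `(1, 0)` entries of the two products are `0` and `8 n²`.
theorem not_commute_pow {n : ℕ} (hn : n ≠ 0) :
    ¬Commute (((A * B) ^ 2) ^ n) (((A * C) ^ 2) ^ n) := by
  intro h
  have := congrFun (congrFun h.eq 1) 0
  simp [AB_sq_pow, AC_sq_pow, Matrix.mul_apply, Fin.sum_univ_three] at this
  exact hn this

def unitA : (Matrix (Fin 3) (Fin 3) ℚ)ˣ := ⟨A, A, A_mul_self, A_mul_self⟩
def unitB : (Matrix (Fin 3) (Fin 3) ℚ)ˣ := ⟨B, B, B_mul_self, B_mul_self⟩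
def unitC : (Matrix (Fin 3) (Fin 3) ℚ)ˣ := ⟨C, C, C_mul_self, C_mul_self⟩

variable {V : Type*} (u v w : V)

open scoped Classical in
noncomputable def gen (t : V) : (Matrix (Fin 3) (Fin 3) ℚ)ˣ :=
  if t = u then unitA else if t = v then unitB else if t = w then unitC else 1

theorem gen_mul_self (t : V) : gen u v w t * gen u v w t = 1 := by
  unfold gen
  split_ifs <;> ext1 <;> simp [unitA, unitB, unitC, A_mul_self, B_mul_self, C_mul_self]

variable {u v w}

theorem gen_eq_one {t : V} (hu : t ≠ u) (hv : t ≠ v) (hw : t ≠ w) : gen u v w t = 1 := by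
  simp [gen, hu, hv, hw]

theorem commute_gen_of_ne {t t' : V} (ht : t ≠ u) (ht' : t' ≠ u) :
    Commute (gen u v w t) (gen u v w t') := by
  have hBC : Commute unitB unitC := Units.ext commute_B_C.eq
  simp only [gen, if_neg ht, if_neg ht']
  split_ifs <;> first
    | exact Commute.refl _ | exact Commute.one_left _ | exact Commute.one_right _
    | exact hBC | exact hBC.symm

end ReflectionRep

namespace RACG

variable {V W : Type*} {G : SimpleGraph V} {G' : SimpleGraph W} {H : Type*} [Group H]

def of (v : V) : RACG G := PresentedGroup.of v

@[simp]
theorem of_mul_self (v : V) : (of v : RACG G) * of v = 1 :=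
  PresentedGroup.one_of_mem (Or.inl ⟨v, rfl⟩)

@[simp]
theorem of_mul_cancel_left (v : V) (x : RACG G) : of v * (of v * x) = x := by
  rw [← mul_assoc, of_mul_self, one_mul]

@[simp]
theorem of_inv (v : V) : (of v : RACG G)⁻¹ = of v :=
  inv_eq_of_mul_eq_one_right (of_mul_self v)

@[simp]
theorem inv_of_mul_of (a b : V) : (of a * of b : RACG G)⁻¹ = of b * of a := by
  simp [mul_inv_rev]

theorem commute_of_adj {v w : V} (h : G.Adj v w) : Commute (of v : RACG G) (of w) :=
  commutatorElement_eq_one_iff_commute.mp (PresentedGroup.one_of_mem (Or.inr ⟨v, w, h, rfl⟩))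

theorem closure_range_of : closure (Set.range (of : V → RACG G)) = ⊤ :=
  PresentedGroup.closure_range_of _

def lift (f : V → H) (hsq : ∀ v, f v * f v = 1)
    (hcomm : ∀ v w, G.Adj v w → Commute (f v) (f w)) : RACG G →* H :=
  PresentedGroup.toGroup <| by
    rintro r (⟨v, rfl⟩ | ⟨v, w, hvw, rfl⟩)
    · simpa using hsq v
    · simpa [commutatorElement_def] using
        commutatorElement_eq_one_iff_commute.mpr (hcomm v w hvw)

@[simp]
theorem lift_of (f : V → H) (hsq : ∀ v, f v * f v = 1)
    (hcomm : ∀ v w, G.Adj v w → Commute (f v) (f w)) (v : V) :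
    lift (G := G) f hsq hcomm (of v) = f v :=
  PresentedGroup.toGroup.of _

@[ext]
theorem hom_ext {φ ψ : RACG G →* H} (h : ∀ v, φ (of v) = ψ (of v)) : φ = ψ :=
  PresentedGroup.ext h

theorem commute_of_forall_commute_of (φ : RACG G →* H) {y : H}
    (h : ∀ v, Commute (φ (of v)) y) (x : RACG G) : Commute (φ x) y := by
  have hx : x ∈ (centralizer {y}).comap φ :=
    PresentedGroup.generated_by _ _
      (fun v => mem_comap.mpr (mem_centralizer_singleton_iff.mpr (h v).eq)) x
  exact mem_centralizer_singleton_iff.mp (mem_comap.mp hx)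

theorem normal_closure_of_forall_conj_mem {S : Set (RACG G)}
    (h : ∀ v, ∀ x ∈ S, of v * x * of v ∈ closure S) : (closure S).Normal := by
  have hconj : ∀ v, ∀ k ∈ closure S, of v * k * of v ∈ closure S := fun v k hk => by
    have : (closure S).map (MulAut.conj (of v)).toMonoidHom ≤ closure S := by
      rw [MonoidHom.map_closure, closure_le]
      rintro _ ⟨x, hx, rfl⟩
      simpa using h v x hx
    simpa using this (mem_map_of_mem _ hk)
  rw [← normalizer_eq_top_iff, eq_top_iff, ← closure_range_of, closure_le]
  rintro _ ⟨v, rfl⟩ k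
  rw [of_inv]
  exact ⟨hconj v k, fun hk => by simpa [mul_assoc] using hconj v _ hk⟩

def map (f : G →g G') : RACG G →* RACG G' :=
  lift (fun v => of (f v)) (fun _ => of_mul_self _) fun _ _ h => commute_of_adj (f.map_adj h)

@[simp]
theorem map_of (f : G →g G') (v : V) : map f (of v) = of (f v) :=
  lift_of _ _ _ v

def congr (e : G ≃g G') : RACG G ≃* RACG G' :=
  MonoidHom.toMulEquiv (map e.toHom) (map e.symm.toHom) (by ext; simp) (by ext; simp)

section Join

variable (s : Set V)

open scoped Classical in
noncomputable def toProdInduce : RACG G →* RACG (G.induce sᶜ) × RACG (G.induce s) :=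
  lift (fun v => if h : v ∈ s then MonoidHom.inr _ _ (of ⟨v, h⟩)
      else MonoidHom.inl _ _ (of ⟨v, h⟩))
    (fun v => by split_ifs <;> simp)
    fun v w hvw => by
      split_ifs with hv hw hw
      · exact (commute_of_adj (G := G.induce s) (v := ⟨v, hv⟩) (w := ⟨w, hw⟩) hvw).map _
      · exact (MonoidHom.commute_inl_inr _ _).symm
      · exact MonoidHom.commute_inl_inr _ _
      · exact (commute_of_adj (G := G.induce sᶜ) (v := ⟨v, hv⟩) (w := ⟨w, hw⟩) hvw).map _

variable {s}

noncomputable def ofProdInduce (hs : ∀ a ∉ s, ∀ b ∈ s, G.Adj a b) :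
    RACG (G.induce sᶜ) × RACG (G.induce s) →* RACG G :=
  (map (SimpleGraph.Embedding.induce sᶜ).toHom).noncommCoprod
    (map (SimpleGraph.Embedding.induce s).toHom) fun x y =>
      commute_of_forall_commute_of _ (fun a => (commute_of_forall_commute_of _
        (fun b => by simpa using (commute_of_adj (hs a a.2 b b.2)).symm) y).symm) x

noncomputable def mulEquivProdInduce (hs : ∀ a ∉ s, ∀ b ∈ s, G.Adj a b) :
    RACG G ≃* RACG (G.induce sᶜ) × RACG (G.induce s) :=
  MonoidHom.toMulEquiv (toProdInduce s) (ofProdInduce hs)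
    (by ext v; by_cases h : v ∈ s <;> simp [toProdInduce, ofProdInduce, h])
    (by
      have hl : (toProdInduce (G := G) s).comp (map (SimpleGraph.Embedding.induce sᶜ).toHom) =
          MonoidHom.inl _ _ :=
        hom_ext fun v => by simp [toProdInduce, Set.notMem_of_mem_compl v.2]
      have hr : (toProdInduce (G := G) s).comp (map (SimpleGraph.Embedding.induce s).toHom) =
          MonoidHom.inr _ _ :=
        hom_ext fun v => by simp [toProdInduce, v.2]
      refine MonoidHom.ext fun ⟨x, y⟩ => ?_
      simp [ofProdInduce, ← MonoidHom.comp_apply, hl, hr])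

end Join

open scoped Classical in
noncomputable def reflectionRep (u v w : V) (hv : ¬G.Adj u v) (hw : ¬G.Adj u w) :
    RACG G →* (Matrix (Fin 3) (Fin 3) ℚ)ˣ :=
  lift (ReflectionRep.gen u v w) (ReflectionRep.gen_mul_self u v w) fun a b hab => by
    by_cases ha : a = u
    · subst ha
      rw [ReflectionRep.gen_eq_one hab.ne.symm (fun h : b = v => hv (h ▸ hab))
        (fun h : b = w => hw (h ▸ hab))]
      exact Commute.one_right _
    by_cases hb : b = u
    · subst hb
      rw [ReflectionRep.gen_eq_one ha (fun h : a = v => hv (h ▸ hab.symm))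
        (fun h : a = w => hw (h ▸ hab.symm))]
      exact Commute.one_left _
    exact ReflectionRep.commute_gen_of_ne ha hb

theorem not_isVirtuallyAbelian {u v w : V} (huv : u ≠ v) (huw : u ≠ w) (hvw : v ≠ w)
    (hv : ¬G.Adj u v) (hw : ¬G.Adj u w) : ¬IsVirtuallyAbelian (RACG G) := by
  intro h
  obtain ⟨n, hn, hcomm⟩ := h.exists_commute_pow
  apply ReflectionRep.not_commute_pow hn
  have := (hcomm ((of u * of v) ^ 2) ((of u * of w) ^ 2)).map
    ((Units.coeHom _).comp (reflectionRep u v w hv hw))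
  simpa [reflectionRep, ReflectionRep.gen, ReflectionRep.unitA, ReflectionRep.unitB,
    ReflectionRep.unitC, huv.symm, huw.symm, hvw.symm] using this

theorem commute_of_mul_of_of_compl_adj (hG : ∀ v, (Gᶜ.neighborSet v).Subsingleton)
    {a b c d : V} (hab : Gᶜ.Adj a b) (hcd : Gᶜ.Adj c d) :
    Commute (of a * of b : RACG G) (of c * of d) := by
  by_cases hca : c = a
  · subst hca
    obtain rfl := hG _ hab hcd
    exact Commute.refl _
  by_cases hcb : c = b
  · subst hcb
    obtain rfl := hG _ hab.symm hcd
    exact inv_of_mul_of (G := G) a c ▸ (Commute.refl _).inv_right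
  have hda : d ≠ a := fun h => hcb (hG _ hab (h ▸ hcd.symm)).symm
  have hdb : d ≠ b := fun h => hca (hG _ hab.symm (h ▸ hcd.symm)).symm
  have hca' := SimpleGraph.adj_of_compl_adj_of_ne hG hab hca hcb
  have hcb' := SimpleGraph.adj_of_compl_adj_of_ne hG hab.symm hcb hca
  have hda' := SimpleGraph.adj_of_compl_adj_of_ne hG hab hda hdb
  have hdb' := SimpleGraph.adj_of_compl_adj_of_ne hG hab.symm hdb hda
  exact ((commute_of_adj hca').symm.mul_left (commute_of_adj hcb').symm).mul_right
    ((commute_of_adj hda').symm.mul_left (commute_of_adj hdb').symm)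

variable (G) in
def complEdgeSubgroup : Subgroup (RACG G) :=
  closure {x | ∃ a b, Gᶜ.Adj a b ∧ x = of a * of b}

theorem of_mul_of_mem_complEdgeSubgroup {a b : V} (hab : Gᶜ.Adj a b) :
    of a * of b ∈ complEdgeSubgroup G :=
  subset_closure ⟨a, b, hab, rfl⟩

theorem isMulCommutative_complEdgeSubgroup (hG : ∀ v, (Gᶜ.neighborSet v).Subsingleton) :
    IsMulCommutative (complEdgeSubgroup G) := by
  refine isMulCommutative_closure ?_
  rintro _ ⟨a, b, hab, rfl⟩ _ ⟨c, d, hcd, rfl⟩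
  exact commute_of_mul_of_of_compl_adj hG hab hcd

theorem of_mul_mul_of_mem_complEdgeSubgroup (hG : ∀ v, (Gᶜ.neighborSet v).Subsingleton)
    (t : V) {a b : V} (hab : Gᶜ.Adj a b) :
    of t * (of a * of b) * of t ∈ complEdgeSubgroup G := by
  have hba : of b * of a ∈ complEdgeSubgroup G := of_mul_of_mem_complEdgeSubgroup hab.symm
  by_cases hta : t = a
  · subst hta
    simpa [← mul_assoc] using hba
  by_cases htb : t = b
  · subst htb
    simpa [mul_assoc] using hba
  have hcomm : Commute (of t) (of a * of b : RACG G) :=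
    (commute_of_adj (SimpleGraph.adj_of_compl_adj_of_ne hG hab hta htb)).mul_right
      (commute_of_adj (SimpleGraph.adj_of_compl_adj_of_ne hG hab.symm htb hta))
  simpa [hcomm.eq, mul_assoc] using of_mul_of_mem_complEdgeSubgroup hab

theorem normal_complEdgeSubgroup (hG : ∀ v, (Gᶜ.neighborSet v).Subsingleton) :
    (complEdgeSubgroup G).Normal :=
  normal_closure_of_forall_conj_mem fun t _ ⟨_, _, hab, hx⟩ =>
    hx ▸ of_mul_mul_of_mem_complEdgeSubgroup hG t hab

theorem finite_quotient_complEdgeSubgroup [Finite V]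
    (hG : ∀ v, (Gᶜ.neighborSet v).Subsingleton) :
    Finite (RACG G ⧸ complEdgeSubgroup G) := by
  have := normal_complEdgeSubgroup hG
  set σ : V → RACG G ⧸ complEdgeSubgroup G := fun v => (of v : RACG G)
  have hσ : ∀ {a b}, Gᶜ.Adj a b → σ a * σ b = 1 := fun hab =>
    (QuotientGroup.eq_one_iff _).mpr (of_mul_of_mem_complEdgeSubgroup hab)
  refine finite_of_closure_eq_top_of_commute (Set.finite_range σ) ?_ ?_ ?_
  · rw [show σ = QuotientGroup.mk' _ ∘ of from rfl, Set.range_comp, ← MonoidHom.map_closure,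
      closure_range_of, map_top_of_surjective _ (QuotientGroup.mk'_surjective _)]
  · rintro _ ⟨a, rfl⟩ _ ⟨b, rfl⟩
    by_cases hab : G.Adj a b
    · exact ((commute_of_adj hab).map (QuotientGroup.mk' _)).eq
    by_cases heq : a = b
    · rw [heq]
    have hab' : Gᶜ.Adj a b := (G.compl_adj a b).mpr ⟨heq, hab⟩
    rw [hσ hab', hσ hab'.symm]
  · rintro _ ⟨v, rfl⟩
    exact isOfFinOrder_iff_pow_eq_one.mpr
      ⟨2, two_pos, by simp [σ, pow_two, ← QuotientGroup.mk_mul]⟩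

theorem isVirtuallyAbelian_of_subsingleton_compl_neighborSet [Finite V]
    (hG : ∀ v, (Gᶜ.neighborSet v).Subsingleton) : IsVirtuallyAbelian (RACG G) := by
  have := isMulCommutative_complEdgeSubgroup hG
  have := finite_quotient_complEdgeSubgroup hG
  exact ⟨complEdgeSubgroup G, index_ne_zero_of_finite, fun a ha b hb => setLike_mul_comm ha hb⟩

theorem isVirtuallyAbelian_iff [Finite V] :
    IsVirtuallyAbelian (RACG G) ↔ ∀ v, (Gᶜ.neighborSet v).Subsingleton := by
  refine ⟨fun h a b hab c hac => ?_, isVirtuallyAbelian_of_subsingleton_compl_neighborSet⟩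
  by_contra hbc
  rw [SimpleGraph.mem_neighborSet, G.compl_adj] at hab hac
  exact not_isVirtuallyAbelian hab.1 hac.1 hbc hab.2 hac.2 h

end RACG

theorem racg_virtually_abelian_iff_general {V : Type*} [Fintype V] (G : SimpleGraph V) :
    ((∃ H : Subgroup (RACG G), H.index ≠ 0 ∧ ∀ a ∈ H, ∀ b ∈ H, a * b = b * a) ↔
      (¬ ∃ u v w : V, u ≠ v ∧ u ≠ w ∧ v ≠ w ∧
          ¬ G.Adj u v ∧ ¬ G.Adj u w ∧ ¬ G.Adj v w) ∧
      (¬ ∃ v w u : V, G.Adj v w ∧ u ≠ v ∧ u ≠ w ∧ ¬ G.Adj u v ∧ ¬ G.Adj u w)) ∧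
    (∀ v₁ v₂ : V, v₁ ≠ v₂ → ¬ G.Adj v₁ v₂ →
      (∀ u : V, u ≠ v₁ → u ≠ v₂ → G.Adj u v₁ ∧ G.Adj u v₂) →
      Nonempty (RACG G ≃*
        RACG (⊥ : SimpleGraph (Fin 2)) ×
          RACG (SimpleGraph.induce {u : V | u ≠ v₁ ∧ u ≠ v₂} G))) := by
  refine ⟨RACG.isVirtuallyAbelian_iff.trans ?_, fun v₁ v₂ h12 hn hadj => ⟨?_⟩⟩
  · simp only [Set.Subsingleton, SimpleGraph.mem_neighborSet, G.compl_adj]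
    grind [SimpleGraph.irrefl]
  · refine (RACG.mulEquivProdInduce fun a ha b hb => ?_).trans
      ((RACG.congr (SimpleGraph.induceComplNeIsoBot h12 hn)).prodCongr (MulEquiv.refl _))
    rcases Set.eq_or_eq_of_mem_compl_setOf_ne_and_ne ha with rfl | rfl
    exacts [(hadj b hb.1 hb.2).1.symm, (hadj b hb.1 hb.2).2.symm]

/-- A right-angled Coxeter group on a finite non-complete graph is virtually abelian iff
there are no three pairwise non-adjacent vertices and no edge `{v,w}` together with a
third vertex adjacent to neither endpoint.  Equivalently, if every vertex other than two
fixed non-adjacent vertices `v₁, v₂` is adjacent to both, then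
`C(G) ≅ D_∞ × C(G ∖ {v₁, v₂})`, where `D_∞` is the Coxeter group of two non-adjacent
vertices. -/
theorem racg_virtually_abelian_iff {V : Type*} [Fintype V] (G : SimpleGraph V)
    (hnc : ∃ v w : V, v ≠ w ∧ ¬ G.Adj v w) :
    ((∃ H : Subgroup (RACG G), H.index ≠ 0 ∧ ∀ a ∈ H, ∀ b ∈ H, a * b = b * a) ↔
      (¬ ∃ u v w : V, u ≠ v ∧ u ≠ w ∧ v ≠ w ∧
          ¬ G.Adj u v ∧ ¬ G.Adj u w ∧ ¬ G.Adj v w) ∧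
      (¬ ∃ v w u : V, G.Adj v w ∧ u ≠ v ∧ u ≠ w ∧ ¬ G.Adj u v ∧ ¬ G.Adj u w)) ∧
    (∀ v₁ v₂ : V, v₁ ≠ v₂ → ¬ G.Adj v₁ v₂ →
      (∀ u : V, u ≠ v₁ → u ≠ v₂ → G.Adj u v₁ ∧ G.Adj u v₂) →
      Nonempty (RACG G ≃*
        RACG (⊥ : SimpleGraph (Fin 2)) ×
          RACG (SimpleGraph.induce {u : V | u ≠ v₁ ∧ u ≠ v₂} G))) :=
  racg_virtually_abelian_iff_general G
end

section
/- Let 𝒢 be a bipartite finite graph and Γ = A(𝒢) its right-angled Artin group. Then h_n(Γ) ≤ (Π(n))^{α(𝒢)} · (n!)^{α(𝒢)} for all n ≥ 1, where Π(n) is the number of integer partitions of n. -/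
open Finset

/-- The right-angled Artin group of a simple graph `G`. -/
abbrev RAAG {V : Type*} (G : SimpleGraph V) : Type _ :=
  PresentedGroup {r : FreeGroup V |
    ∃ v w : V, G.Adj v w ∧
      r = FreeGroup.of v * FreeGroup.of w * (FreeGroup.of v)⁻¹ * (FreeGroup.of w)⁻¹}

lemma hall_side {V : Type*} [Fintype V] [DecidableEq V] (G : SimpleGraph V)
    [DecidableRel G.Adj] (col : G.Coloring (Fin 2)) (A : Finset V)
    (hind : (A : Set V).Pairwise fun x y => ¬ G.Adj x y)
    (hmax : ∀ B : Finset V, ((B : Set V).Pairwise fun x y => ¬ G.Adj x y) → B.card ≤ A.card)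
    (i : Fin 2) :
    ∃ g : {x // x ∈ Aᶜ.filter (fun v => col v = i)} → V, Function.Injective g ∧
      ∀ x, g x ∈ A ∧ col (g x) ≠ i ∧ G.Adj x.1 (g x) := by
  classical
  set C : Finset V := Aᶜ with hC
  have hcov : ∀ u v : V, G.Adj u v → u ∈ C ∨ v ∈ C := by
    intro u v huv
    by_contra h
    push_neg at h
    have hu : u ∈ A := by simpa [hC] using h.1
    have hv : v ∈ A := by simpa [hC] using h.2
    exact hind hu hv huv.ne huv
  set Ci : Finset V := C.filter (fun v => col v = i) with hCi
  set Ti : Finset V := univ.filter (fun v => col v ≠ i ∧ v ∉ C) with hTi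
  set t : {x // x ∈ Ci} → Finset V := fun c => Ti.filter (G.Adj c.1) with ht
  have hall : ∀ S : Finset {x // x ∈ Ci}, S.card ≤ (S.biUnion t).card := by
    intro S
    by_contra hlt
    push_neg at hlt
    set N : Finset V := S.biUnion t with hN
    set Simg : Finset V := S.image (fun s => s.1) with hSimg
    have hSimgC : Simg ⊆ C := by
      intro u hu
      obtain ⟨s, _, rfl⟩ := mem_image.mp hu
      exact (mem_filter.mp s.2).1
    set C' : Finset V := (C \ Simg) ∪ N with hC'
    have key : ∀ u v : V, G.Adj u v → u ∈ C → u ∉ C' → v ∈ C' := by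
      intro u v huv huC huC'
      have hu : u ∈ Simg := by
        by_contra h
        exact huC' (mem_union_left _ (mem_sdiff.mpr ⟨huC, h⟩))
      obtain ⟨s, hsS, hs⟩ := mem_image.mp hu
      have hcolu : col u = i := by rw [← hs]; exact (mem_filter.mp s.2).2
      have hcolv : col v ≠ i := by
        intro h
        exact col.valid huv (by rw [hcolu, h])
      by_cases hvC : v ∈ C
      · have hvS : v ∉ Simg := by
          intro h
          obtain ⟨s', _, hs'⟩ := mem_image.mp h
          exact hcolv (by rw [← hs']; exact (mem_filter.mp s'.2).2)
        exact mem_union_left _ (mem_sdiff.mpr ⟨hvC, hvS⟩)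
      · refine mem_union_right _ (mem_biUnion.mpr ⟨s, hsS, ?_⟩)
        refine mem_filter.mpr ⟨mem_filter.mpr ⟨mem_univ _, hcolv, hvC⟩, ?_⟩
        rw [hs]; exact huv
    have hindep : ((C'ᶜ : Finset V) : Set V).Pairwise fun x y => ¬ G.Adj x y := by
      intro u hu v hv _ huv
      simp only [coe_compl, Set.mem_compl_iff, mem_coe] at hu hv
      rcases hcov u v huv with h | h
      · exact hv (key u v huv h hu)
      · exact hu (key v u huv.symm h hv)
    have hle := hmax _ hindep
    have h1 : C'.card ≤ (C \ Simg).card + N.card := card_union_le _ _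
    have h2 : (C \ Simg).card = C.card - Simg.card := card_sdiff_of_subset hSimgC
    have h3 : Simg.card = S.card := card_image_of_injective S Subtype.val_injective
    have h4 : Simg.card ≤ C.card := card_le_card hSimgC
    have h5 : C'.card < C.card := by omega
    have h6 : (C'ᶜ).card = Fintype.card V - C'.card := card_compl _
    have h7 : C.card = Fintype.card V - A.card := card_compl _
    have h8 : A.card ≤ Fintype.card V := card_le_univ _
    have h9 : C'.card ≤ Fintype.card V := card_le_univ _
    omega
  obtain ⟨g, hginj, hgmem⟩ :=
    (Finset.all_card_le_biUnion_card_iff_exists_injective t).mp hall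
  refine ⟨g, hginj, fun x => ?_⟩
  have hx := hgmem x
  rw [ht] at hx
  have h1 := mem_filter.mp hx
  have h2 := mem_filter.mp h1.1
  refine ⟨?_, h2.2.1, h1.2⟩
  simpa [hC] using h2.2.2

lemma exists_matching {V : Type*} [Fintype V] [DecidableEq V] (G : SimpleGraph V)
    [DecidableRel G.Adj] (col : G.Coloring (Fin 2)) (A : Finset V)
    (hind : (A : Set V).Pairwise fun x y => ¬ G.Adj x y)
    (hmax : ∀ B : Finset V, ((B : Set V).Pairwise fun x y => ¬ G.Adj x y) → B.card ≤ A.card) :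
    ∃ f : V → V, (∀ c, c ∉ A → f c ∈ A ∧ G.Adj c (f c)) ∧
      Set.InjOn f {v | v ∉ A} := by
  classical
  obtain ⟨g0, h0inj, h0⟩ := hall_side G col A hind hmax 0
  obtain ⟨g1, h1inj, h1⟩ := hall_side G col A hind hmax 1
  refine ⟨fun v =>
    if h : v ∈ Aᶜ.filter (fun v => col v = 0) then g0 ⟨v, h⟩
    else if h' : v ∈ Aᶜ.filter (fun v => col v = 1) then g1 ⟨v, h'⟩ else v, ?_, ?_⟩
  · intro c hc
    have hcC : c ∈ Aᶜ := mem_compl.mpr hc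
    rcases (by omega : col c = 0 ∨ col c = 1) with h | h
    · have hm : c ∈ Aᶜ.filter (fun v => col v = 0) := mem_filter.mpr ⟨hcC, h⟩
      simp only [dif_pos hm]
      exact ⟨(h0 ⟨c, hm⟩).1, (h0 ⟨c, hm⟩).2.2⟩
    · have hm' : c ∉ Aᶜ.filter (fun v => col v = 0) := by
        intro hmem
        exact absurd ((mem_filter.mp hmem).2) (by omega)
      have hm : c ∈ Aᶜ.filter (fun v => col v = 1) := mem_filter.mpr ⟨hcC, h⟩
      simp only [dif_neg hm', dif_pos hm]
      exact ⟨(h1 ⟨c, hm⟩).1, (h1 ⟨c, hm⟩).2.2⟩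
  · intro u hu v hv huv
    simp only [Set.mem_setOf_eq] at hu hv
    have huC : u ∈ Aᶜ := mem_compl.mpr hu
    have hvC : v ∈ Aᶜ := mem_compl.mpr hv
    rcases (by omega : col u = 0 ∨ col u = 1) with hcu | hcu <;>
      rcases (by omega : col v = 0 ∨ col v = 1) with hcv | hcv
    · have hmu : u ∈ Aᶜ.filter (fun v => col v = 0) := mem_filter.mpr ⟨huC, hcu⟩
      have hmv : v ∈ Aᶜ.filter (fun v => col v = 0) := mem_filter.mpr ⟨hvC, hcv⟩
      simp only [dif_pos hmu, dif_pos hmv] at huv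
      exact congrArg Subtype.val (h0inj huv)
    · have hmu : u ∈ Aᶜ.filter (fun v => col v = 0) := mem_filter.mpr ⟨huC, hcu⟩
      have hmv' : v ∉ Aᶜ.filter (fun v => col v = 0) := fun hmem =>
        absurd ((mem_filter.mp hmem).2) (by omega)
      have hmv : v ∈ Aᶜ.filter (fun v => col v = 1) := mem_filter.mpr ⟨hvC, hcv⟩
      simp only [dif_pos hmu, dif_neg hmv', dif_pos hmv] at huv
      have c1 := (h0 ⟨u, hmu⟩).2.1
      have c2 := (h1 ⟨v, hmv⟩).2.1
      rw [huv] at c1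
      omega
    · have hmv : v ∈ Aᶜ.filter (fun v => col v = 0) := mem_filter.mpr ⟨hvC, hcv⟩
      have hmu' : u ∉ Aᶜ.filter (fun v => col v = 0) := fun hmem =>
        absurd ((mem_filter.mp hmem).2) (by omega)
      have hmu : u ∈ Aᶜ.filter (fun v => col v = 1) := mem_filter.mpr ⟨huC, hcu⟩
      simp only [dif_neg hmu', dif_pos hmu, dif_pos hmv] at huv
      have c1 := (h1 ⟨u, hmu⟩).2.1
      have c2 := (h0 ⟨v, hmv⟩).2.1
      rw [huv] at c1
      omega
    · have hmu' : u ∉ Aᶜ.filter (fun v => col v = 0) := fun hmem =>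
        absurd ((mem_filter.mp hmem).2) (by omega)
      have hmv' : v ∉ Aᶜ.filter (fun v => col v = 0) := fun hmem =>
        absurd ((mem_filter.mp hmem).2) (by omega)
      have hmu : u ∈ Aᶜ.filter (fun v => col v = 1) := mem_filter.mpr ⟨huC, hcu⟩
      have hmv : v ∈ Aᶜ.filter (fun v => col v = 1) := mem_filter.mpr ⟨hvC, hcv⟩
      simp only [dif_neg hmu', dif_neg hmv', dif_pos hmu, dif_pos hmv] at huv
      exact congrArg Subtype.val (h1inj huv)

lemma card_conjClasses_perm_le (n : ℕ) :
    Nat.card (ConjClasses (Equiv.Perm (Fin n))) ≤ Fintype.card (Nat.Partition n) := by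
  rw [← Nat.card_eq_fintype_card]
  have h : ∀ σ τ : Equiv.Perm (Fin n), IsConj σ τ → σ.partition = τ.partition :=
    fun σ τ h => Equiv.Perm.partition_eq_of_isConj.mp h
  have hF : Function.Injective
      (Quotient.lift Equiv.Perm.partition h : ConjClasses (Equiv.Perm (Fin n)) → _) := by
    intro x y
    induction x using Quotient.ind
    induction y using Quotient.ind
    intro hxy
    exact Quotient.sound (Equiv.Perm.partition_eq_of_isConj.mpr hxy)
  calc Nat.card (ConjClasses (Equiv.Perm (Fin n)))
      ≤ Nat.card (Nat.Partition (Fintype.card (Fin n))) :=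
        Nat.card_le_card_of_injective _ hF
    _ = Nat.card (Nat.Partition n) := by rw [Fintype.card_fin]

/-- For a bipartite finite graph `G` with independence number `α`, the number of
homomorphisms from `A(G)` to `Sym(n)` is at most `Π(n)^α · (n!)^α`, where `Π(n)` is
the number of integer partitions of `n`. -/
theorem card_hom_raag_bipartite_le {V : Type*} [Fintype V]
    (G : SimpleGraph V) (hbip : G.Colorable 2) (α : ℕ)
    (hα : IsGreatest {m : ℕ | ∃ A : Finset V,
        ((A : Set V).Pairwise fun x y => ¬ G.Adj x y) ∧ A.card = m} α)
    (n : ℕ) (hn : 1 ≤ n) :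
    Nat.card (RAAG G →* Equiv.Perm (Fin n)) ≤
      (Fintype.card (Nat.Partition n)) ^ α * (n.factorial) ^ α := by
  classical
  obtain ⟨col⟩ := hbip
  obtain ⟨A, hindA, hcardA⟩ := hα.1
  have hmaxα : ∀ B : Finset V, ((B : Set V).Pairwise fun x y => ¬ G.Adj x y) → B.card ≤ α :=
    fun B hB => hα.2 ⟨B, hB, rfl⟩
  have hmax : ∀ B : Finset V, ((B : Set V).Pairwise fun x y => ¬ G.Adj x y) → B.card ≤ A.card :=
    fun B hB => (hmaxα B hB).trans_eq hcardA.symm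
  obtain ⟨f, hf, hfinj⟩ := exists_matching G col A hindA hmax
  set C : Finset V := Aᶜ with hC
  -- cardinality facts
  have hCcard : C.card = Fintype.card V - α := by rw [hC, card_compl, hcardA]
  have hVle : Fintype.card V ≤ 2 * α := by
    have hX : (univ.filter (fun v => col v = 0)).card ≤ α := by
      refine hmaxα _ ?_
      intro u hu v hv _ huv
      simp only [coe_filter, Set.mem_setOf_eq] at hu hv
      exact col.valid huv (by rw [hu.2, hv.2])
    have hY : (univ.filter (fun v => ¬ col v = 0)).card ≤ α := by
      refine hmaxα _ ?_
      intro u hu v hv _ huv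
      simp only [coe_filter, Set.mem_setOf_eq] at hu hv
      have h1 : col u = 1 := by omega
      have h2 : col v = 1 := by omega
      exact col.valid huv (by rw [h1, h2])
    have h := Finset.card_union_le (univ.filter (fun v => col v = 0))
      (univ.filter (fun v => ¬ col v = 0))
    rw [Finset.filter_union_filter_not_eq, card_univ] at h
    omega
  have hCα : C.card ≤ α := by omega
  set D : Finset V := A \ C.image f with hD
  have himg : C.image f ⊆ A := by
    intro u hu
    obtain ⟨c, hc, rfl⟩ := mem_image.mp hu
    exact (hf c (mem_compl.mp hc)).1
  have himgcard : (C.image f).card = C.card := by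
    apply card_image_of_injOn
    intro u hu v hv h
    exact hfinj (Set.mem_setOf_eq ▸ mem_compl.mp hu) (Set.mem_setOf_eq ▸ mem_compl.mp hv) h
  have hDcard : D.card = α - C.card := by
    rw [hD, card_sdiff_of_subset himg, himgcard, hcardA]
  -- commuting relation
  have hcomm : ∀ (φ : RAAG G →* Equiv.Perm (Fin n)) (v w : V), G.Adj v w →
      Commute (φ (PresentedGroup.of v)) (φ (PresentedGroup.of w)) := by
    intro φ v w hvw
    have hrel : (PresentedGroup.mk _
        (FreeGroup.of v * FreeGroup.of w * (FreeGroup.of v)⁻¹ * (FreeGroup.of w)⁻¹) :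
        RAAG G) = 1 := by
      apply (QuotientGroup.eq_one_iff _).mpr
      exact Subgroup.subset_normalClosure ⟨v, w, hvw, rfl⟩
    have h2 : φ (PresentedGroup.of v) * φ (PresentedGroup.of w) *
        (φ (PresentedGroup.of v))⁻¹ * (φ (PresentedGroup.of w))⁻¹ = 1 := by
      have h3 := congrArg φ hrel
      simpa [map_mul, map_inv, PresentedGroup.of] using h3
    rw [← commutatorElement_def] at h2
    exact commutatorElement_eq_one_iff_commute.mp h2
  -- the injection
  have hinj : Nat.card (RAAG G →* Equiv.Perm (Fin n)) ≤ Nat.card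
      (({c // c ∈ C} → {p : Equiv.Perm (Fin n) × Equiv.Perm (Fin n) // Commute p.1 p.2}) ×
        ({a // a ∈ D} → Equiv.Perm (Fin n))) := by
    apply Nat.card_le_card_of_injective
      (f := fun φ => ((fun c => ⟨(φ (PresentedGroup.of (f c.1)), φ (PresentedGroup.of c.1)),
          (hcomm φ c.1 (f c.1) (hf c.1 (mem_compl.mp c.2)).2).symm⟩,
        fun a => φ (PresentedGroup.of a.1))))
    intro φ ψ h
    have h1 := congrArg Prod.fst h
    have h2 := congrArg Prod.snd h
    simp only at h1 h2
    have key : ∀ v : V, φ (PresentedGroup.of v) = ψ (PresentedGroup.of v) := by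
      intro v
      by_cases hv : v ∈ A
      · by_cases hv2 : v ∈ C.image f
        · obtain ⟨c, hc, rfl⟩ := mem_image.mp hv2
          have := congrFun h1 ⟨c, hc⟩
          have := congrArg Subtype.val this
          exact congrArg Prod.fst this
        · have := congrFun h2 ⟨v, mem_sdiff.mpr ⟨hv, hv2⟩⟩
          exact this
      · have := congrFun h1 ⟨v, mem_compl.mpr hv⟩
        have := congrArg Subtype.val this
        exact congrArg Prod.snd this
    exact PresentedGroup.ext key
  have hcardT : Nat.card
      (({c // c ∈ C} → {p : Equiv.Perm (Fin n) × Equiv.Perm (Fin n) // Commute p.1 p.2}) ×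
        ({a // a ∈ D} → Equiv.Perm (Fin n))) =
      (Nat.card (ConjClasses (Equiv.Perm (Fin n))) * n.factorial) ^ C.card *
        n.factorial ^ D.card := by
    have hperm : Nat.card (Equiv.Perm (Fin n)) = n.factorial := by
      rw [Nat.card_eq_fintype_card, Fintype.card_perm, Fintype.card_fin]
    rw [Nat.card_prod, Nat.card_fun, Nat.card_fun,
      card_comm_eq_card_conjClasses_mul_card, hperm]
    congr 2
    · rw [Nat.card_eq_fintype_card, Fintype.card_coe]
    · rw [Nat.card_eq_fintype_card, Fintype.card_coe]
  set P := Fintype.card (Nat.Partition n) with hP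
  have hPpos : 1 ≤ P := Fintype.card_pos
  have hKP : Nat.card (ConjClasses (Equiv.Perm (Fin n))) ≤ P := card_conjClasses_perm_le n
  calc Nat.card (RAAG G →* Equiv.Perm (Fin n))
      ≤ (Nat.card (ConjClasses (Equiv.Perm (Fin n))) * n.factorial) ^ C.card *
        n.factorial ^ D.card := by rw [← hcardT]; exact hinj
    _ ≤ (P * n.factorial) ^ C.card * n.factorial ^ D.card :=
        Nat.mul_le_mul_right _ (Nat.pow_le_pow_left (Nat.mul_le_mul_right _ hKP) _)
    _ = P ^ C.card * (n.factorial ^ C.card * n.factorial ^ D.card) := by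
        rw [mul_pow]; ring
    _ = P ^ C.card * n.factorial ^ α := by
        rw [← pow_add, hDcard, Nat.add_sub_cancel' hCα]
    _ ≤ P ^ α * n.factorial ^ α :=
        Nat.mul_le_mul_right _ (Nat.pow_le_pow_right hPpos hCα)
end
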